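/- Let Z be a ℤ-valued random walk path of length n from α to β (nearest-neighbor steps ±1). Denote by P_{n,β}(α) the number of such paths, and by Q_{n,β}(α) the number of such paths γ with γ_i ≥ min(α,β) for all 0 ≤ i ≤ n. Then Q_{n,β}(α) ≥ ((|α−β| ∨ 1)/n)·P_{n,β}(α) for all n ≥ 1. -/

import Mathlib

/-!
Cycle lemma argument. For `α ≤ β`, extend the steps of a path periodically; the partial sums
then satisfy `S (j + n) = S j + b` with `b = β - α`. Let `m` be the minimum of `S` over one
period. For each level `m + i` with `i < b`, the last visit to that level in a window of length
`n` starting at the minimum is a time after which `S` stays strictly above it, because upward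
steps have size one and the next period starts `b` higher; together with the minimum itself this
gives at least `max b 1` rotations of each path that never go below the starting point.
Rotating by `r` is a bijection of step sequences that preserves the endpoint, so counting pairs
(path, good rotation) gives `max b 1 * P ≤ n * Q`. Time reversal reduces `α > β` to `α < β`.
-/

open scoped Classical

/-- Position at time `k` of the nearest-neighbor path on `ℤ` starting at `α`
whose steps are `+1` (for `true`) or `-1` (for `false`) encoded by `σ`. -/
def pathPos (n : ℕ) (α : ℤ) (σ : Fin n → Bool) (k : ℕ) : ℤ :=
  α + ∑ l : Fin n, if (l : ℕ) < k then (if σ l then 1 else -1) else 0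

open Finset

def PrefixSumsNonneg (y : ℕ → ℤ) (n : ℕ) : Prop :=
  ∀ k ≤ n, 0 ≤ ∑ l ∈ range k, y l

section CycleLemma

variable {x : ℕ → ℤ} {n : ℕ}

lemma sum_range_add_of_periodic (hx : Function.Periodic x n) (k : ℕ) :
    ∑ l ∈ range (k + n), x l = ∑ l ∈ range k, x l + ∑ l ∈ range n, x l := by
  induction k with
  | zero => simp
  | succ k ih => rw [Nat.add_right_comm, sum_range_succ, ih, hx, sum_range_succ]; ring

lemma sum_range_add_mul_of_periodic (hx : Function.Periodic x n) (k q : ℕ) :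
    ∑ l ∈ range (k + q * n), x l = ∑ l ∈ range k, x l + q * ∑ l ∈ range n, x l := by
  induction q with
  | zero => simp
  | succ q ih =>
    rw [Nat.succ_mul, ← add_assoc, sum_range_add_of_periodic hx, ih]; push_cast; ring

lemma sum_range_shift_of_periodic (hx : Function.Periodic x n) (r : ℕ) :
    ∑ l ∈ range n, x (r + l) = ∑ l ∈ range n, x l := by
  have := sum_range_add_of_periodic hx r
  rw [sum_range_add] at this
  linarith

lemma exists_sum_range_eq (hx : ∀ l, x l ≤ 1) {a c : ℕ} {v : ℤ} (hac : a ≤ c)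
    (ha : ∑ l ∈ range a, x l ≤ v) (hc : v ≤ ∑ l ∈ range c, x l) :
    ∃ j, a ≤ j ∧ j ≤ c ∧ ∑ l ∈ range j, x l = v := by
  induction c, hac using Nat.le_induction with
  | base => exact ⟨a, le_rfl, le_rfl, le_antisymm ha hc⟩
  | succ c hac ih =>
    by_cases hvc : v ≤ ∑ l ∈ range c, x l
    · obtain ⟨j, haj, hjc, hj⟩ := ih hvc
      exact ⟨j, haj, hjc.trans c.le_succ, hj⟩
    · rw [sum_range_succ] at hc
      have := hx c
      exact ⟨c + 1, hac.trans c.le_succ, le_rfl, by rw [sum_range_succ]; omega⟩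

lemma prefixSumsNonneg_shift_iff (r : ℕ) :
    PrefixSumsNonneg (fun l => x (r + l)) n ↔
      ∀ k ≤ n, ∑ l ∈ range r, x l ≤ ∑ l ∈ range (r + k), x l := by
  simp only [PrefixSumsNonneg, sum_range_add, le_add_iff_nonneg_right]

lemma sum_range_ge_of_forall_le (hn : 0 < n) (hx : Function.Periodic x n) {k₀ : ℕ}
    (hk₀ : ∀ j < n, ∑ l ∈ range k₀, x l ≤ ∑ l ∈ range j, x l) (j : ℕ) :
    ∑ l ∈ range k₀, x l + (j / n : ℕ) * ∑ l ∈ range n, x l ≤ ∑ l ∈ range j, x l := by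
  conv_rhs => rw [← Nat.mod_add_div' j n, sum_range_add_mul_of_periodic hx]
  linarith [hk₀ _ (Nat.mod_lt j hn)]

lemma exists_last_visit (hn : 0 < n) (hx : Function.Periodic x n) (hx1 : ∀ l, x l ≤ 1)
    {k₀ : ℕ} (hk₀ : ∀ j < n, ∑ l ∈ range k₀, x l ≤ ∑ l ∈ range j, x l)
    {i : ℕ} (hi : (i : ℤ) < ∑ l ∈ range n, x l) :
    ∃ L, k₀ ≤ L ∧ L < k₀ + n ∧ ∑ l ∈ range L, x l = ∑ l ∈ range k₀, x l + i ∧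
      ∀ k ≤ n, ∑ l ∈ range L, x l ≤ ∑ l ∈ range (L + k), x l := by
  let P j := ∑ l ∈ range j, x l = ∑ l ∈ range k₀, x l + i
  have hend := sum_range_add_of_periodic hx k₀
  obtain ⟨w, hk₀w, hw, hwi⟩ := exists_sum_range_eq hx1 (by omega : k₀ ≤ k₀ + n)
    (by omega : _ ≤ ∑ l ∈ range k₀, x l + i) (by omega)
  set L := Nat.findGreatest P (k₀ + n)
  have hL : ∑ l ∈ range L, x l = ∑ l ∈ range k₀, x l + i := Nat.findGreatest_spec (P := P) hw hwi
  have hLn : L ≠ k₀ + n := fun h => by rw [h] at hL; omega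
  refine ⟨L, hk₀w.trans (Nat.le_findGreatest hw hwi), lt_of_le_of_ne (Nat.findGreatest_le _) hLn,
    hL, fun k hk => ?_⟩
  rcases Nat.eq_zero_or_pos k with rfl | hk0
  · simp
  by_cases hj : L + k ≤ k₀ + n
  · by_contra! hlt
    -- with upward steps of size one, the sums would have to revisit the level of `L` after `L`
    obtain ⟨j, hLj, hj, hji⟩ := exists_sum_range_eq hx1 hj hlt.le (by omega)
    exact Nat.findGreatest_is_greatest (P := P) (by omega) hj (hji.trans hL)
  · have hq : (1 : ℤ) ≤ ((L + k) / n : ℕ) := by exact_mod_cast (Nat.one_le_div_iff hn).2 (by omega)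
    nlinarith [sum_range_ge_of_forall_le hn hx hk₀ (L + k)]

/-- The cycle lemma of Dvoretzky and Motzkin, for sequences that are skip-free upwards. -/
theorem max_le_card_filter_prefixSumsNonneg (hn : 0 < n) (hx : Function.Periodic x n)
    (hx1 : ∀ l, x l ≤ 1) (hb : 0 ≤ ∑ l ∈ range n, x l) :
    max (∑ l ∈ range n, x l) 1 ≤ #{r ∈ range n | PrefixSumsNonneg (fun l => x (r + l)) n} := by
  obtain ⟨k₀, -, hk₀⟩ :=
    exists_min_image (range n) (fun k => ∑ l ∈ range k, x l) ⟨0, mem_range.2 hn⟩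
  replace hk₀ : ∀ j < n, ∑ l ∈ range k₀, x l ≤ ∑ l ∈ range j, x l :=
    fun j hj => hk₀ j (mem_range.2 hj)
  have hperiodic : Function.Periodic (fun r => PrefixSumsNonneg (fun l => x (r + l)) n) n :=
    fun r => by simp only [Nat.add_right_comm r n, hx _]
  rw [← Nat.count_eq_card_filter_range, ← Nat.filter_Ico_card_eq_of_periodic k₀ n _ hperiodic]
  refine max_le ?_ ?_
  · have hvisit : ∀ i ∈ range (∑ l ∈ range n, x l).toNat, ∃ L, k₀ ≤ L ∧ L < k₀ + n ∧
        ∑ l ∈ range L, x l = ∑ l ∈ range k₀, x l + i ∧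
        ∀ k ≤ n, ∑ l ∈ range L, x l ≤ ∑ l ∈ range (L + k), x l :=
      fun i hi => exists_last_visit hn hx hx1 hk₀ (by rwa [mem_range, Int.lt_toNat] at hi)
    choose! L hk₀L hLn hLi hL using hvisit
    calc ∑ l ∈ range n, x l = #(range (∑ l ∈ range n, x l).toNat) := by simp [hb]
      _ ≤ _ := by
        refine Nat.cast_le.2 (card_le_card_of_injOn L (fun i hi => ?_) fun i hi j hj hij => ?_)
        · exact mem_filter.2 ⟨mem_Ico.2 ⟨hk₀L i hi, hLn i hi⟩,
            (prefixSumsNonneg_shift_iff _).2 (hL i hi)⟩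
        · have hLij := hLi i hi
          rw [hij, hLi j hj] at hLij
          omega
  · have hk₀mem : k₀ ∈ {r ∈ Ico k₀ (k₀ + n) | PrefixSumsNonneg (fun l => x (r + l)) n} :=
      mem_filter.2 ⟨mem_Ico.2 ⟨le_rfl, by omega⟩, (prefixSumsNonneg_shift_iff k₀).2 fun k _ => by
        nlinarith [sum_range_ge_of_forall_le hn hx hk₀ (k₀ + k)]⟩
    exact_mod_cast card_pos.2 ⟨k₀, hk₀mem⟩

end CycleLemma

section Paths

open Fin.NatCast

variable {n : ℕ} [NeZero n]

/-- The cast `(l : Fin n)` wraps around, so this is the `n`-periodic extension of the steps. -/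
def stepSeq (σ : Fin n → Bool) (l : ℕ) : ℤ := if σ l then 1 else -1

lemma stepSeq_periodic (σ : Fin n → Bool) : Function.Periodic (stepSeq σ) n := fun l => by
  simp [stepSeq]

lemma stepSeq_le_one (σ : Fin n → Bool) (l : ℕ) : stepSeq σ l ≤ 1 := by
  unfold stepSeq; split <;> omega

lemma pathPos_eq_add_sum (α : ℤ) (σ : Fin n → Bool) {k : ℕ} (hk : k ≤ n) :
    pathPos n α σ k = α + ∑ l ∈ range k, stepSeq σ l := by
  have hrange : range k = {l ∈ range n | l < k} := by
    rw [range_eq_Ico, range_eq_Ico, Ico_filter_lt, min_eq_right hk]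
  rw [pathPos, hrange, sum_filter,
    ← Fin.sum_univ_eq_sum_range (fun l => if l < k then stepSeq σ l else 0)]
  simp [stepSeq]

def rotate (r : ℕ) : (Fin n → Bool) ≃ (Fin n → Bool) :=
  (Equiv.addRight (r : Fin n)).symm.arrowCongr (Equiv.refl Bool)

lemma stepSeq_rotate (r : ℕ) (σ : Fin n → Bool) (l : ℕ) :
    stepSeq (rotate r σ) l = stepSeq σ (r + l) := by
  simp [rotate, stepSeq, add_comm]

lemma pathPos_rotate (α : ℤ) (r : ℕ) (σ : Fin n → Bool) {k : ℕ} (hk : k ≤ n) :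
    pathPos n α (rotate r σ) k = α + ∑ l ∈ range k, stepSeq σ (r + l) := by
  simp only [pathPos_eq_add_sum α _ hk, stepSeq_rotate]

end Paths

section Counting

variable {n : ℕ} [NeZero n] {α β : ℤ}

lemma rotate_mem_iff (r : ℕ) (σ : Fin n → Bool) :
    (pathPos n α (rotate r σ) n = β ∧ ∀ k ≤ n, α ≤ pathPos n α (rotate r σ) k) ↔
      pathPos n α σ n = β ∧ PrefixSumsNonneg (fun l => stepSeq σ (r + l)) n := by
  rw [pathPos_rotate α r σ le_rfl, pathPos_eq_add_sum α σ le_rfl,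
    sum_range_shift_of_periodic (stepSeq_periodic σ)]
  refine and_congr_right' (forall₂_congr fun k hk => ?_)
  rw [pathPos_rotate α r σ hk, le_add_iff_nonneg_right]

theorem max_mul_card_le_mul_card (hαβ : α ≤ β) :
    max (β - α) 1 * #{σ : Fin n → Bool | pathPos n α σ n = β} ≤
      n * #{σ : Fin n → Bool | pathPos n α σ n = β ∧ ∀ k ≤ n, α ≤ pathPos n α σ k} := by
  set P : Finset (Fin n → Bool) := {σ | pathPos n α σ n = β}
  let good (σ : Fin n → Bool) (r : ℕ) := PrefixSumsNonneg (fun l => stepSeq σ (r + l)) n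
  have hP : ∀ σ ∈ P, max (β - α) 1 ≤ #((range n).bipartiteAbove good σ) := by
    intro σ hσ
    have hsum : ∑ l ∈ range n, stepSeq σ l = β - α := by
      rw [mem_filter, pathPos_eq_add_sum α σ le_rfl] at hσ
      omega
    rw [← hsum]
    exact max_le_card_filter_prefixSumsNonneg (NeZero.pos n) (stepSeq_periodic σ)
      (stepSeq_le_one σ) (by omega)
  have hQ : ∀ r, #(P.bipartiteBelow good r) =
      #{σ : Fin n → Bool | pathPos n α σ n = β ∧ ∀ k ≤ n, α ≤ pathPos n α σ k} :=
    fun r => card_equiv (rotate r) fun σ => by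
      simp only [bipartiteBelow, P, good, mem_filter, mem_univ, true_and, rotate_mem_iff]
  calc max (β - α) 1 * #P = ∑ σ ∈ P, max (β - α) 1 := by rw [sum_const, nsmul_eq_mul, mul_comm]
    _ ≤ ∑ σ ∈ P, (#((range n).bipartiteAbove good σ) : ℤ) := sum_le_sum hP
    _ = ∑ r ∈ range n, (#(P.bipartiteBelow good r) : ℤ) := by
      exact_mod_cast sum_card_bipartiteAbove_eq_sum_card_bipartiteBelow good
    _ = _ := by simp only [hQ, sum_const, card_range, nsmul_eq_mul]

end Counting

section Reverse

variable {n : ℕ}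

def reverse (σ : Fin n → Bool) : Fin n → Bool := fun i => !σ i.rev

lemma reverse_involutive : Function.Involutive (reverse (n := n)) := fun σ => by
  funext i; simp [reverse]

lemma pathPos_reverse {α β : ℤ} {σ : Fin n → Bool} (hσ : pathPos n α σ n = β) {k : ℕ}
    (hk : k ≤ n) : pathPos n β (reverse σ) k = pathPos n α σ (n - k) := by
  set f : Fin n → ℤ := fun l => if σ l then 1 else -1
  have hsplit : ∑ l : Fin n, (if (l.rev : ℕ) < k then f l else 0) +
      ∑ l : Fin n, (if (l : ℕ) < n - k then f l else 0) =
      ∑ l : Fin n, (if (l : ℕ) < n then f l else 0) := by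
    rw [← sum_add_distrib]
    refine sum_congr rfl fun l _ => ?_
    have := l.isLt
    rw [Fin.val_rev]
    split_ifs <;> omega
  have hflip : ∑ l : Fin n, (if (l : ℕ) < k then (if reverse σ l then 1 else -1) else 0) =
      -∑ l : Fin n, (if (l.rev : ℕ) < k then f l else 0) := by
    rw [← Equiv.sum_comp Fin.revPerm, ← sum_neg_distrib]
    refine sum_congr rfl fun l _ => ?_
    simp only [reverse, Fin.revPerm_apply, Fin.rev_rev, f]
    split_ifs <;> simp_all
  simp only [pathPos] at hσ ⊢
  rw [hflip]
  linarith

lemma reverse_mem_of_mem {α β : ℤ} {p : ℤ → Prop} {σ : Fin n → Bool}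
    (h : pathPos n α σ n = β ∧ ∀ k ≤ n, p (pathPos n α σ k)) :
    pathPos n β (reverse σ) n = α ∧ ∀ k ≤ n, p (pathPos n β (reverse σ) k) := by
  refine ⟨by rw [pathPos_reverse h.1 le_rfl, Nat.sub_self]; simp [pathPos], fun k hk => ?_⟩
  rw [pathPos_reverse h.1 hk]
  exact h.2 _ (Nat.sub_le n k)

lemma card_filter_reverse (α β : ℤ) (p : ℤ → Prop) [DecidablePred p] :
    #{σ : Fin n → Bool | pathPos n α σ n = β ∧ ∀ k ≤ n, p (pathPos n α σ k)} =
      #{σ : Fin n → Bool | pathPos n β σ n = α ∧ ∀ k ≤ n, p (pathPos n β σ k)} :=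
  card_equiv reverse_involutive.toPerm fun σ => by
    simp only [mem_filter, mem_univ, true_and, Function.Involutive.coe_toPerm]
    exact ⟨reverse_mem_of_mem, fun h => reverse_involutive σ ▸ reverse_mem_of_mem h⟩

lemma card_filter_pathPos_eq_comm (α β : ℤ) :
    #{σ : Fin n → Bool | pathPos n α σ n = β} = #{σ : Fin n → Bool | pathPos n β σ n = α} := by
  simpa using card_filter_reverse (n := n) α β (fun _ => True)

end Reverse

theorem stmt11 (n : ℕ) (hn : 1 ≤ n) (α β : ℤ) :
    (((Finset.univ.filter (fun σ : Fin n → Bool =>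
        pathPos n α σ n = β ∧ ∀ k ≤ n, min α β ≤ pathPos n α σ k)).card : ℝ))
      ≥ ((max |α - β| 1 : ℤ) : ℝ) / n *
        ((Finset.univ.filter (fun σ : Fin n → Bool => pathPos n α σ n = β)).card : ℝ) := by
  wlog hαβ : α ≤ β generalizing α β
  · have hreverse := card_filter_reverse (n := n) α β (min α β ≤ ·)
    rw [hreverse, card_filter_pathPos_eq_comm, min_comm, abs_sub_comm]
    exact this β α (by omega)
  have : NeZero n := ⟨by omega⟩
  rw [min_eq_left hαβ, abs_sub_comm, abs_of_nonneg (sub_nonneg.2 hαβ), ge_iff_le,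
    div_mul_eq_mul_div, div_le_iff₀ (by positivity), mul_comm _ (n : ℝ)]
  exact_mod_cast max_mul_card_le_mul_card hαβ
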